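/- Let ε > 0. For every M > 0 there exists Ξ > 0 such that for all real ξ > Ξ, there is λ ∈ ℂ with (λ² + ξ²)² = i·ε·ξ³ and Re λ ≥ M. -/

import Mathlib

/-!
Let `l` be a root with `0 ≤ Re l` and put `w = l² + ξ²`, so `w² = iεξ³`. Since `w²` is purely
imaginary, `(Im w)² = ‖w‖² / 2 = εξ³ / 2`, and `Im w = Im l² = 2 Re l Im l`. Hence
`εξ³ / 2 ≤ 4 (Re l)² ‖l‖² = 4 (Re l)² ‖l²‖`, while `‖l²‖ ≤ ξ² + ‖w‖ ≤ 2ξ²` once `ξ ≥ ε`.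
This gives `(Re l)² ≥ εξ / 16`, which grows without bound.
-/

open Complex

namespace Complex

theorem exists_sq_eq_of_re_nonneg (z : ℂ) : ∃ l : ℂ, l ^ 2 = z ∧ 0 ≤ l.re := by
  obtain ⟨l, hl⟩ := IsAlgClosed.exists_pow_nat_eq z two_pos
  rcases le_total 0 l.re with h | h
  · exact ⟨l, hl, h⟩
  · exact ⟨-l, by rw [neg_sq, hl], by simpa using h⟩

theorem two_mul_im_sq_of_re_sq_eq_zero {w : ℂ} (hw : (w ^ 2).re = 0) :
    2 * w.im ^ 2 = ‖w ^ 2‖ := by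
  have hre : w.re ^ 2 - w.im ^ 2 = 0 := by rw [sq, mul_re] at hw; linear_combination hw
  rw [norm_pow, Complex.sq_norm, normSq_apply]
  linear_combination -hre

theorem im_sq_sq_le (l : ℂ) : (l ^ 2).im ^ 2 ≤ 4 * l.re ^ 2 * ‖l ^ 2‖ := by
  have him : (l ^ 2).im = 2 * l.re * l.im := by rw [sq, mul_im]; ring
  rw [him, norm_pow, Complex.sq_norm, normSq_apply]
  nlinarith [sq_nonneg (l.re ^ 2)]

end Complex

theorem exists_sq_add_sq_sq_eq_of_re_nonneg (ξ : ℝ) (c : ℂ) :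
    ∃ l : ℂ, (l ^ 2 + (ξ : ℂ) ^ 2) ^ 2 = c ∧ 0 ≤ l.re := by
  obtain ⟨w, hw⟩ := IsAlgClosed.exists_pow_nat_eq c two_pos
  obtain ⟨l, hl, hre⟩ := exists_sq_eq_of_re_nonneg (w - (ξ : ℂ) ^ 2)
  exact ⟨l, by rw [hl, sub_add_cancel, hw], hre⟩

theorem div_le_re_sq_of_sq_add_sq_sq_eq {ε ξ : ℝ} (hε : 0 < ε) (hεξ : ε ≤ ξ) {l : ℂ}
    (hl : (l ^ 2 + (ξ : ℂ) ^ 2) ^ 2 = I * ε * (ξ : ℂ) ^ 3) : ε * ξ / 16 ≤ l.re ^ 2 := by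
  have hξ : 0 < ξ := hε.trans_le hεξ
  set w := l ^ 2 + (ξ : ℂ) ^ 2 with hw
  have hw_sq_norm : ‖w ^ 2‖ = ε * ξ ^ 3 := by
    rw [hl, norm_mul, norm_mul, norm_I, norm_pow, norm_real, norm_real, Real.norm_of_nonneg hε.le,
      Real.norm_of_nonneg hξ.le, one_mul]
  have hw_im_sq : 2 * w.im ^ 2 = ε * ξ ^ 3 := by
    rw [two_mul_im_sq_of_re_sq_eq_zero (by simp [hl, ← ofReal_pow]), hw_sq_norm]
  have hw_im : w.im = (l ^ 2).im := by simp [hw, ← ofReal_pow]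
  have hw_norm : ‖w‖ ≤ ξ ^ 2 := by
    rw [← pow_le_pow_iff_left₀ (norm_nonneg w) (by positivity) two_ne_zero, ← norm_pow,
      hw_sq_norm]
    nlinarith [pow_pos hξ 3]
  have hl_sq_norm : ‖l ^ 2‖ ≤ 2 * ξ ^ 2 := by
    have : l ^ 2 = w - (ξ : ℂ) ^ 2 := by rw [hw, add_sub_cancel_right]
    calc ‖l ^ 2‖ ≤ ‖w‖ + ‖(ξ : ℂ) ^ 2‖ := this ▸ norm_sub_le w _
      _ ≤ 2 * ξ ^ 2 := by
        rw [← ofReal_pow, norm_real, Real.norm_of_nonneg (by positivity)]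
        linarith
  have key : ε * ξ ^ 3 / 2 ≤ 8 * l.re ^ 2 * ξ ^ 2 :=
    calc ε * ξ ^ 3 / 2 = (l ^ 2).im ^ 2 := by rw [← hw_im]; linarith
      _ ≤ 4 * l.re ^ 2 * ‖l ^ 2‖ := im_sq_sq_le l
      _ ≤ 8 * l.re ^ 2 * ξ ^ 2 := by nlinarith [sq_nonneg l.re]
  have hξ2 : 0 < ξ ^ 2 := by positivity
  nlinarith

theorem stmt_14 (ε : ℝ) (hε : 0 < ε) :
    ∀ M : ℝ, 0 < M → ∃ Ξ : ℝ, 0 < Ξ ∧ ∀ ξ : ℝ, Ξ < ξ →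
      ∃ lam : ℂ, (lam^2 + (ξ : ℂ)^2)^2 = Complex.I * ε * (ξ : ℂ)^3 ∧ M ≤ lam.re := by
  intro M hM
  refine ⟨16 * M ^ 2 / ε + ε, by positivity, fun ξ hξ => ?_⟩
  have hM_sq : 0 ≤ 16 * M ^ 2 / ε := by positivity
  obtain ⟨l, hl, hre⟩ := exists_sq_add_sq_sq_eq_of_re_nonneg ξ (I * ε * (ξ : ℂ) ^ 3)
  refine ⟨l, hl, ?_⟩
  have hre_sq := div_le_re_sq_of_sq_add_sq_sq_eq hε (by linarith) hl
  have hMξ : 16 * M ^ 2 < ε * ξ := by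
    rw [← div_lt_iff₀' hε]; linarith
  rw [← pow_le_pow_iff_left₀ hM.le hre two_ne_zero]
  linarith
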